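/- Every complete positive ordered abelian semigroup that satisfies the ω-comparison property also satisfies the Corona Factorization Property for semigroups. -/

import Mathlib

/-! Cut `y` into consecutive blocks of length `m + 2`. Since `(x n)` increases and
`x n ≤ (m + 1)·y n`, each block `b` satisfies `(m + 2)·x₀ ≤ (m + 1)·b`, i.e. `x₀ <_s b`.
ω-comparison then bounds `x'` by finitely many blocks, which form a partial sum of `y`. -/

namespace Stmt2

variable {W : Type*} [AddCommSemigroup W] [PartialOrder W]

/-- `rep n x` is the `(n+1)`-fold sum `x + x + ⋯ + x`, so that `rep n x = (n+1)·x`. -/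
def rep : ℕ → W → W
  | 0, x => x
  | n + 1, x => rep n x + x

/-- `sumTo y n = y 0 + y 1 + ⋯ + y n`. -/
def sumTo (y : ℕ → W) : ℕ → W
  | 0 => y 0
  | n + 1 => sumTo y n + y (n + 1)

/-- `x ∝ y` : `x ≤ n·y` for some positive integer `n` (encoded as `n + 1`, `n : ℕ`). -/
def Propto (x y : W) : Prop := ∃ n : ℕ, x ≤ rep n y

/-- `x <_s y` : `(k+1)·x ≤ k·y` for some positive integer `k`. -/
def StDom (x y : W) : Prop := ∃ k : ℕ, rep (k + 1) x ≤ rep k y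

/-- `x ≪ y` : for every increasing sequence whose supremum exists and dominates `y`,
some term of the sequence dominates `x`. -/
def CC (x y : W) : Prop :=
  ∀ f : ℕ → W, Monotone f → ∀ s : W, IsLUB (Set.range f) s → y ≤ s → ∃ n, x ≤ f n

/-- `W` is complete: every increasing sequence has a supremum, and `x ≤ y` holds as soon
as `x' ≤ y` for every `x' ≪ x`. -/
def Complete (W : Type*) [AddCommSemigroup W] [PartialOrder W] : Prop :=
  (∀ f : ℕ → W, Monotone f → ∃ s : W, IsLUB (Set.range f) s) ∧
    ∀ x y : W, (∀ x' : W, CC x' x → x' ≤ y) → x ≤ y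

/-- A full sequence: increasing, and for all `y' ≪ y` one has `y' ∝ x n` for some `n`. -/
def FullSeq (x : ℕ → W) : Prop :=
  Monotone x ∧ ∀ y' y : W, CC y' y → ∃ n, Propto y' (x n)

/-- A full element: `y' ∝ x` for all `y' ≪ y`. -/
def FullElem (x : W) : Prop := ∀ y' y : W, CC y' y → Propto y' x

/-- The Corona Factorization Property for semigroups: for every full sequence `(x_n)`,
every sequence `(y_n)`, every `x' ≪ x_0` and every positive integer `m` (encoded `m+1`)
with `x_n ≤ m·y_n` for all `n`, one has `x' ≤ y_0 + ⋯ + y_k` for some `k`. -/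
def CFP (W : Type*) [AddCommSemigroup W] [PartialOrder W] : Prop :=
  ∀ x : ℕ → W, FullSeq x → ∀ y : ℕ → W, ∀ x' : W, ∀ m : ℕ,
    CC x' (x 0) → (∀ n, x n ≤ rep m (y n)) → ∃ k, x' ≤ sumTo y k


/-- The ω-comparison property: whenever `x' ≪ x` and `x <_s y_j` for all `j`, then
`x' ≤ y_0 + ⋯ + y_n` for some `n`. -/
def OmegaComparison (W : Type*) [AddCommSemigroup W] [PartialOrder W] : Prop :=
  ∀ x' x : W, ∀ y : ℕ → W, CC x' x → (∀ j, StDom x (y j)) → ∃ n, x' ≤ sumTo y n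

section Algebra

omit [PartialOrder W]

lemma rep_eq_sumTo_const (x : W) : ∀ N, rep N x = sumTo (fun _ => x) N
  | 0 => rfl
  | N + 1 => congrArg (· + x) (rep_eq_sumTo_const x N)

lemma rep_add (a b : W) : ∀ n, rep n (a + b) = rep n a + rep n b
  | 0 => rfl
  | n + 1 => by rw [rep, rep, rep, rep_add a b n, add_add_add_comm]

lemma rep_sumTo (m : ℕ) (f : ℕ → W) :
    ∀ N, rep m (sumTo f N) = sumTo (fun i => rep m (f i)) N
  | 0 => rfl
  | N + 1 => by rw [sumTo, sumTo, rep_add, rep_sumTo m f N]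

lemma sumTo_add_sumTo_shift (y : ℕ → W) (a : ℕ) :
    ∀ b, sumTo y a + sumTo (fun i => y (a + 1 + i)) b = sumTo y (a + 1 + b)
  | 0 => rfl
  | b + 1 => by rw [sumTo, ← add_assoc, sumTo_add_sumTo_shift y a b]; rfl

lemma sumTo_blocks (y : ℕ → W) (l : ℕ) :
    ∀ n, sumTo (fun j => sumTo (fun i => y (j * (l + 1) + i)) l) n
      = sumTo y (n * (l + 1) + l)
  | 0 => by simp only [sumTo, Nat.zero_mul, Nat.zero_add]
  | n + 1 => by
    rw [sumTo, sumTo_blocks y l n, show (n + 1) * (l + 1) = n * (l + 1) + l + 1 by ring,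
      sumTo_add_sumTo_shift]

end Algebra

section Monotone

variable [AddLeftMono W]

lemma sumTo_le_sumTo {f g : ℕ → W} (h : ∀ i, f i ≤ g i) : ∀ N, sumTo f N ≤ sumTo g N
  | 0 => h 0
  | N + 1 => add_le_add (sumTo_le_sumTo h N) (h _)

lemma rep_le_rep_sumTo {a : W} {f : ℕ → W} {m : ℕ} (h : ∀ i, a ≤ rep m (f i)) (N : ℕ) :
    rep N a ≤ rep m (sumTo f N) := by
  rw [rep_eq_sumTo_const, rep_sumTo]
  exact sumTo_le_sumTo h N

end Monotone

theorem cfp_of_omegaComparison_general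
    (hadd : ∀ x y z : W, x ≤ y → x + z ≤ y + z)
    (homega : OmegaComparison W) :
    CFP W := by
  have : AddLeftMono W := ⟨fun z x y h => by simpa only [add_comm z] using hadd x y z h⟩
  intro x hfull y x' m hcc hle
  have hblock : ∀ j, StDom (x 0) (sumTo (fun i => y (j * (m + 2) + i)) (m + 1)) := fun j =>
    ⟨m, rep_le_rep_sumTo (fun i => (hfull.1 (Nat.zero_le _)).trans (hle _)) (m + 1)⟩
  obtain ⟨n, hn⟩ := homega x' (x 0) _ hcc hblock
  exact ⟨n * (m + 2) + (m + 1), sumTo_blocks y (m + 1) n ▸ hn⟩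

/-- Proposition 2.17: every complete positive ordered abelian semigroup with the
ω-comparison property satisfies the Corona Factorization Property for semigroups. -/
theorem cfp_of_omegaComparison
    (hadd : ∀ x y z : W, x ≤ y → x + z ≤ y + z)
    (hpos : ∀ x z : W, x ≤ x + z)
    (hcomplete : Complete W)
    (homega : OmegaComparison W) :
    CFP W :=
  cfp_of_omegaComparison_general hadd homega

end Stmt2
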